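/- (Proof by cases) For all sets of formulas Γ and all formulas A, B, C of L⊃: if Γ ∪ {A} ⊢ C and Γ ∪ {B} ⊢ C, then Γ ∪ {A∨B} ⊢ C, where ⊢ is derivability in the Hilbert system S. -/

import Mathlib

/-- Formulas of the language L⊃ : propositional variables with ∧, ∨,
    intuitionistic → (`imp`) and classical ⊃ (`sup`). -/
inductive Formula : Type
  | var : ℕ → Formula
  | and : Formula → Formula → Formula
  | or  : Formula → Formula → Formula
  | imp : Formula → Formula → Formula
  | sup : Formula → Formula → Formula

/-- The Hilbert system S : `SDeriv Γ A` means Γ ⊢ A. -/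
inductive SDeriv : Set Formula → Formula → Prop
  | hyp {Γ A} : A ∈ Γ → SDeriv Γ A
  | ax1 {Γ} (A B : Formula) : SDeriv Γ (A.imp (B.imp A))
  | ax2 {Γ} (A B C : Formula) :
      SDeriv Γ ((A.imp (B.imp C)).imp ((A.imp B).imp (A.imp C)))
  | ax3 {Γ} (A B : Formula) : SDeriv Γ ((A.and B).imp A)
  | ax4 {Γ} (A B : Formula) : SDeriv Γ ((A.and B).imp B)
  | ax5 {Γ} (A B C : Formula) :
      SDeriv Γ ((C.imp A).imp ((C.imp B).imp (C.imp (A.and B))))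
  | ax6 {Γ} (A B : Formula) : SDeriv Γ (A.imp (A.or B))
  | ax7 {Γ} (A B : Formula) : SDeriv Γ (B.imp (A.or B))
  | ax8 {Γ} (A B C : Formula) :
      SDeriv Γ ((A.imp C).imp ((B.imp C).imp ((A.or B).imp C)))
  | axM1 {Γ} (A B : Formula) : SDeriv Γ ((A.imp B).sup (A.sup B))
  | axM2 {Γ} (A B C : Formula) :
      SDeriv Γ ((A.sup (B.sup C)).imp ((A.sup B).sup (A.sup C)))
  | axM3 {Γ} (A B C : Formula) :
      SDeriv Γ ((A.sup (B.imp C)).imp (B.imp (A.sup C)))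
  | axM4 {Γ} (A B C : Formula) :
      SDeriv Γ ((A.imp (B.sup C)).imp (B.sup (A.imp C)))
  | axM5 {Γ} (A B C : Formula) :
      SDeriv Γ (((A.sup B).sup C).imp ((A.sup C).imp C))
  | axM6 {Γ} (A B C : Formula) :
      SDeriv Γ ((A.sup C).imp ((B.sup C).imp ((A.or B).sup C)))
  | mp {Γ A B} : SDeriv Γ A → SDeriv Γ (A.sup B) → SDeriv Γ B

/-!
The deduction theorem holds for the classical conditional ⊃: AxM1 turns Ax1 into
`C ⊃ (A ⊃ C)`, which lifts axioms and hypotheses of Γ under `A ⊃ _`; `A ⊃ A` comes from `A → A`;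
and AxM2 carries modus ponens under `A ⊃ _`. Hence Γ ⊢ A ⊃ C and Γ ⊢ B ⊃ C, AxM6 combines them
into Γ ⊢ (A ∨ B) ⊃ C, and one application of MP to the hypothesis A ∨ B finishes.
-/

namespace SDeriv

variable {Γ : Set Formula}

theorem closure_induction {Δ : Set Formula} {P : Formula → Prop}
    (hyp : ∀ A ∈ Δ, P A) (ax : ∀ A, (∀ Γ, SDeriv Γ A) → P A)
    (mp : ∀ A B, P A → P (A.sup B) → P B) {C : Formula} (h : SDeriv Δ C) : P C := by
  induction h with
  | hyp hA => exact hyp _ hA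
  | mp _ _ ihA ihAB => exact mp _ _ ihA ihAB
  | ax1 A B => exact ax _ fun _ => ax1 A B
  | ax2 A B C => exact ax _ fun _ => ax2 A B C
  | ax3 A B => exact ax _ fun _ => ax3 A B
  | ax4 A B => exact ax _ fun _ => ax4 A B
  | ax5 A B C => exact ax _ fun _ => ax5 A B C
  | ax6 A B => exact ax _ fun _ => ax6 A B
  | ax7 A B => exact ax _ fun _ => ax7 A B
  | ax8 A B C => exact ax _ fun _ => ax8 A B C
  | axM1 A B => exact ax _ fun _ => axM1 A B
  | axM2 A B C => exact ax _ fun _ => axM2 A B C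
  | axM3 A B C => exact ax _ fun _ => axM3 A B C
  | axM4 A B C => exact ax _ fun _ => axM4 A B C
  | axM5 A B C => exact ax _ fun _ => axM5 A B C
  | axM6 A B C => exact ax _ fun _ => axM6 A B C

theorem mono {Δ : Set Formula} {A : Formula} (h : SDeriv Γ A) (hΓΔ : Γ ⊆ Δ) : SDeriv Δ A :=
  h.closure_induction (fun _ hB => hyp (hΓΔ hB)) (fun _ hB => hB Δ) (fun _ _ => mp)

theorem mp_imp {A B : Formula} (hAB : SDeriv Γ (A.imp B)) (hA : SDeriv Γ A) : SDeriv Γ B :=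
  mp hA (mp hAB (axM1 A B))

theorem sup_self (A : Formula) : SDeriv Γ (A.sup A) :=
  mp (mp_imp (mp_imp (ax2 A (A.imp A) A) (ax1 A (A.imp A))) (ax1 A A)) (axM1 A A)

theorem sup_of_derives {A C : Formula} (h : SDeriv Γ C) : SDeriv Γ (A.sup C) :=
  mp (mp_imp (ax1 C A) h) (axM1 A C)

theorem deduction {A C : Formula} (h : SDeriv (Γ ∪ {A}) C) : SDeriv Γ (A.sup C) := by
  refine h.closure_induction (P := fun C => SDeriv Γ (A.sup C)) ?_
    (fun _ hB => sup_of_derives (hB Γ))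
    (fun _ _ hA hAB => mp hA (mp_imp (axM2 _ _ _) hAB))
  rintro B (hB | rfl)
  · exact sup_of_derives (hyp hB)
  · exact sup_self B

end SDeriv

/-- Proof by cases: if Γ,A ⊢ C and Γ,B ⊢ C then Γ, A∨B ⊢ C. -/
theorem proof_by_cases (Γ : Set Formula) (A B C : Formula)
    (hA : SDeriv (Γ ∪ {A}) C) (hB : SDeriv (Γ ∪ {B}) C) :
    SDeriv (Γ ∪ {A.or B}) C := by
  have hOr : SDeriv Γ ((A.or B).sup C) :=
    SDeriv.mp_imp (SDeriv.mp_imp (SDeriv.axM6 A B C) (SDeriv.deduction hA)) (SDeriv.deduction hB)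
  exact SDeriv.mp (SDeriv.hyp (Or.inr rfl)) (hOr.mono Set.subset_union_left)
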